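/- For every natural number k, 3·a₁(2^k − 1) = 2^{k+2} − (−1)^k (as integers). -/

import Mathlib

open Polynomial

/-- `a₁ n` : number of nonzero coefficients of `(1+x+x²)ⁿ` over `𝔽₂`. -/
noncomputable def a1 (n : ℕ) : ℕ :=
  (((1 + X + X ^ 2 : (ZMod 2)[X]) ^ n).support).card

/-- `a₂ n` : number of nonzero coefficients of `(1+x)(1+x+x²)ⁿ` over `𝔽₂`. -/
noncomputable def a2 (n : ℕ) : ℕ :=
  (((1 + X) * (1 + X + X ^ 2 : (ZMod 2)[X]) ^ n).support).card

/-!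
Over `𝔽₂` squaring is `f(x) ↦ f(x²)`, so with `p = 1 + x + x²` and `r = pᵐ` we get
`p²ᵐ⁺¹ = ((1 + x) r)(x²) + x · r(x²)` and, since `(1 + x) p = 1 + x³`,
`(1 + x) p²ᵐ⁺¹ = r(x²) + x · (x r)(x²)`. The two summands live on even and odd exponents
respectively, so their supports are counted separately:
`a₁(2m+1) = a₂(m) + a₁(m)` and `a₂(2m+1) = 2 a₁(m)`. Along `n = 2ᵏ - 1` (where `2n + 1` is again
of this form) this is a linear recurrence whose solution is the closed form, proved by induction
together with `3 a₂(2ᵏ - 1) = 2ᵏ⁺² + 2 (-1)ᵏ`.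
-/

namespace Polynomial

open Finset

theorem support_X_mul {R : Type*} [Semiring R] (f : R[X]) :
    (X * f).support = f.support.image (· + 1) := by
  ext (_ | n) <;> simp [coeff_X_mul]

theorem card_support_X_mul {R : Type*} [Semiring R] (f : R[X]) :
    #(X * f).support = #f.support := by
  rw [support_X_mul, card_image_of_injective _ (add_left_injective 1)]

variable {R : Type*} [CommSemiring R] (f g : R[X]) (k : ℕ)

theorem coeff_expand_two_mul_add_one : (expand R 2 f).coeff (2 * k + 1) = 0 := by
  rw [coeff_expand two_pos, if_neg (by omega)]

theorem coeff_X_mul_expand_two_mul : (X * expand R 2 f).coeff (2 * k) = 0 := by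
  cases k with
  | zero => exact coeff_X_mul_zero _
  | succ k => exact (coeff_X_mul _ (2 * k + 1)).trans (coeff_expand_two_mul_add_one f k)

theorem support_expand_two_add_X_mul_expand_two :
    (expand R 2 f + X * expand R 2 g).support =
      f.support.image (2 * ·) ∪ g.support.image (2 * · + 1) := by
  ext n
  simp only [mem_support_iff, mem_union, mem_image]
  obtain ⟨k, rfl | rfl⟩ := Nat.even_or_odd' n
  · rw [coeff_add, coeff_expand_mul' two_pos, coeff_X_mul_expand_two_mul, add_zero]
    grind
  · rw [coeff_add, coeff_X_mul, coeff_expand_mul' two_pos, coeff_expand_two_mul_add_one, zero_add]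
    grind

theorem card_support_expand_two_add_X_mul_expand_two :
    #(expand R 2 f + X * expand R 2 g).support = #f.support + #g.support := by
  rw [support_expand_two_add_X_mul_expand_two, card_union_of_disjoint, card_image_of_injective,
    card_image_of_injective]
  · exact fun a b h => by simpa using h
  · exact mul_right_injective₀ two_ne_zero
  · simp only [disjoint_left, mem_image]
    rintro _ ⟨a, -, rfl⟩ ⟨b, -, h⟩
    omega

end Polynomial

open Finset CharTwo

theorem a1_zero : a1 0 = 1 := by
  rw [a1, pow_zero, ← C_1, support_C one_ne_zero, card_singleton]

theorem a2_zero : a2 0 = 2 := by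
  simpa [a2] using card_support_binomial (R := ZMod 2) zero_ne_one one_ne_zero one_ne_zero

theorem a1_two_mul_add_one (m : ℕ) : a1 (2 * m + 1) = a2 m + a1 m := by
  set r : (ZMod 2)[X] := (1 + X + X ^ 2) ^ m
  have h : (1 + X + X ^ 2 : (ZMod 2)[X]) ^ (2 * m + 1) =
      expand (ZMod 2) 2 ((1 + X) * r) + X * expand (ZMod 2) 2 r := by
    rw [ZMod.expand_card, ZMod.expand_card, pow_succ, pow_mul']
    linear_combination (-(X * r ^ 2)) * two_eq_zero (R := (ZMod 2)[X])
  rw [a1, h, card_support_expand_two_add_X_mul_expand_two]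
  rfl

theorem a2_two_mul_add_one (m : ℕ) : a2 (2 * m + 1) = 2 * a1 m := by
  set r : (ZMod 2)[X] := (1 + X + X ^ 2) ^ m
  have h : (1 + X) * (1 + X + X ^ 2 : (ZMod 2)[X]) ^ (2 * m + 1) =
      expand (ZMod 2) 2 r + X * expand (ZMod 2) 2 (X * r) := by
    rw [ZMod.expand_card, ZMod.expand_card, pow_succ, pow_mul']
    linear_combination ((X + X ^ 2) * r ^ 2) * two_eq_zero (R := (ZMod 2)[X])
  rw [a2, h, card_support_expand_two_add_X_mul_expand_two, card_support_X_mul, two_mul]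
  rfl

theorem three_mul_a1_a2_two_pow_sub_one (k : ℕ) :
    3 * (a1 (2 ^ k - 1) : ℤ) = 2 ^ (k + 2) - (-1) ^ k ∧
      3 * (a2 (2 ^ k - 1) : ℤ) = 2 ^ (k + 2) + 2 * (-1) ^ k := by
  induction k with
  | zero => norm_num [a1_zero, a2_zero]
  | succ k ih =>
    obtain ⟨ih1, ih2⟩ := ih
    have hk : 2 ^ (k + 1) - 1 = 2 * (2 ^ k - 1) + 1 := by
      have := Nat.one_le_two_pow (n := k)
      omega
    rw [hk, a1_two_mul_add_one, a2_two_mul_add_one]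
    push_cast
    constructor
    · linear_combination ih1 + ih2
    · linear_combination 2 * ih1

theorem b1_closed_form (k : ℕ) :
    (3 : ℤ) * (a1 (2 ^ k - 1) : ℤ) = 2 ^ (k + 2) - (-1) ^ k :=
  (three_mul_a1_a2_two_pow_sub_one k).1
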